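/- In the market M_k, under the profile (P1, P2) for any preference P2 of doctor d2, the j-th best stable contract of doctor d1 (ordering d1's contracts across all stable allocations from best to worst according to P1) is x^j, for every j = 1, …, k; consequently the j-th quantile stable allocation assigns contract x^j to d1. -/

import Mathlib

/-- A one-to-one matching market with contracts: a finite set `X` of contracts,
finite sets `D` of doctors and `H` of hospitals, maps assigning to each contract
its doctor and its hospital, and fixed, publicly known hospital preferences
(strict linear orders over the hospital's contracts together with `none` = ∅). -/
structure Market where
  X : Type
  D : Type
  H : Type
  [fintypeX : Fintype X]
  [fintypeD : Fintype D]
  [fintypeH : Fintype H]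
  [decEqX : DecidableEq X]
  [decEqD : DecidableEq D]
  [decEqH : DecidableEq H]
  doc : X → D
  hos : X → H
  hpref : ∀ h : H, LinearOrder (Option {x : X // hos x = h})

attribute [instance] Market.fintypeX Market.fintypeD Market.fintypeH
attribute [instance] Market.decEqX Market.decEqD Market.decEqH

namespace Market

variable (M : Market)

/-- The contracts involving doctor `d`. -/
abbrev Xd (d : M.D) : Type := {x : M.X // M.doc x = d}

/-- The contracts involving hospital `h`. -/
abbrev Xh (h : M.H) : Type := {x : M.X // M.hos x = h}

/-- A (strict) preference for doctor `d`: a linear order on `X_d ∪ {∅}`,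
where `none` plays the role of ∅ and "larger" means "more preferred". -/
abbrev DocPref (d : M.D) : Type := LinearOrder (Option (M.Xd d))

/-- A profile of doctor preferences. -/
abbrev Prof : Type := ∀ d : M.D, M.DocPref d

/-- `Y` is an allocation: distinct contracts of `Y` involve distinct doctors and
distinct hospitals. -/
def IsAllocation (Y : Finset M.X) : Prop :=
  ∀ x ∈ Y, ∀ y ∈ Y, x ≠ y → M.doc x ≠ M.doc y ∧ M.hos x ≠ M.hos y

/-- `Y_d`: the contract of `Y` involving doctor `d` (there is a unique one when `Y`
is an allocation), or `none` (= ∅) if there is none. -/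
noncomputable def allocD (Y : Finset M.X) (d : M.D) : Option (M.Xd d) :=
  if h : ∃ x ∈ Y, M.doc x = d then some ⟨h.choose, h.choose_spec.2⟩ else none

/-- `Y_h`: the contract of `Y` involving hospital `h`, or `none` (= ∅) if there is none. -/
noncomputable def allocH (Y : Finset M.X) (h : M.H) : Option (M.Xh h) :=
  if hh : ∃ x ∈ Y, M.hos x = h then some ⟨hh.choose, hh.choose_spec.2⟩ else none

/-- Individual rationality: every agent weakly prefers its assignment to ∅. -/
def IndividuallyRational (P : M.Prof) (Y : Finset M.X) : Prop :=
  (∀ d : M.D, (P d).le none (M.allocD Y d)) ∧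
  (∀ h : M.H, (M.hpref h).le none (M.allocH Y h))

/-- Contract `x` blocks `Y`: `x ∉ Y` and both the doctor and the hospital of `x`
strictly prefer `x` to their assignment under `Y`. -/
def Blocks (P : M.Prof) (Y : Finset M.X) (x : M.X) : Prop :=
  x ∉ Y ∧ (P (M.doc x)).lt (M.allocD Y (M.doc x)) (some ⟨x, rfl⟩) ∧
    (M.hpref (M.hos x)).lt (M.allocH Y (M.hos x)) (some ⟨x, rfl⟩)

/-- `Y` is stable: it is an individually rational allocation and no contract blocks it. -/
def IsStable (P : M.Prof) (Y : Finset M.X) : Prop :=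
  M.IsAllocation Y ∧ M.IndividuallyRational P Y ∧ ∀ x : M.X, ¬ M.Blocks P Y x

/-- A (matching) mechanism: a map from doctor-preference profiles to sets of contracts. -/
abbrev Mech : Type := M.Prof → Finset M.X

/-- `φ_d(P)`: the contract assigned to doctor `d` by mechanism `φ` at profile `P`. -/
noncomputable def assign (φ : M.Mech) (P : M.Prof) (d : M.D) : Option (M.Xd d) :=
  M.allocD (φ P) d

/-- `Pd'` is a manipulation of `φ` at true preference `Pd` for doctor `d`:
for some subprofile of the other doctors, reporting `Pd'` yields an outcome that
`d` strictly prefers (under the true `Pd`) to the outcome from reporting `Pd`. -/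
def IsManipulation (φ : M.Mech) (d : M.D) (Pd Pd' : M.DocPref d) : Prop :=
  ∃ P : M.Prof,
    Pd.lt (M.assign φ (Function.update P d Pd) d) (M.assign φ (Function.update P d Pd') d)

/-- `φ` is non-manipulable (strategy-proof). -/
def NonManipulable (φ : M.Mech) : Prop :=
  ∀ (d : M.D) (Pd Pd' : M.DocPref d), ¬ M.IsManipulation φ d Pd Pd'

/-- The option set `O^φ(Pd)` left open by report `Pd` of doctor `d`. -/
def optionSet (φ : M.Mech) (d : M.D) (Pd : M.DocPref d) : Set (Option (M.Xd d)) :=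
  {o | ∃ P : M.Prof, o = M.assign φ (Function.update P d Pd) d}

/-- `a` is the `Pd`-worst element of `S` (i.e. `a = W_d(Pd, S)`). -/
def IsWorst (d : M.D) (Pd : M.DocPref d) (S : Set (Option (M.Xd d)))
    (a : Option (M.Xd d)) : Prop :=
  a ∈ S ∧ ∀ b ∈ S, Pd.le a b

/-- `a` is the `Pd`-best element of `S` (i.e. `a = C_d(Pd, S)`). -/
def IsBest (d : M.D) (Pd : M.DocPref d) (S : Set (Option (M.Xd d)))
    (a : Option (M.Xd d)) : Prop :=
  a ∈ S ∧ ∀ b ∈ S, Pd.le b a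

/-- `Pd'` is an obvious manipulation of `φ` at `Pd`: it is a manipulation and either
`W_d(Pd, O^φ(Pd')) P_d W_d(Pd, O^φ(Pd))` or `C_d(Pd, O^φ(Pd')) P_d C_d(Pd, O^φ(Pd))`. -/
def IsObviousManipulation (φ : M.Mech) (d : M.D) (Pd Pd' : M.DocPref d) : Prop :=
  M.IsManipulation φ d Pd Pd' ∧
    ((∃ a b, M.IsWorst d Pd (M.optionSet φ d Pd') a ∧
        M.IsWorst d Pd (M.optionSet φ d Pd) b ∧ Pd.lt b a) ∨
     (∃ a b, M.IsBest d Pd (M.optionSet φ d Pd') a ∧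
        M.IsBest d Pd (M.optionSet φ d Pd) b ∧ Pd.lt b a))

/-- `φ` is not obviously manipulable (NOM). -/
def NOM (φ : M.Mech) : Prop :=
  ∀ (d : M.D) (Pd Pd' : M.DocPref d), ¬ M.IsObviousManipulation φ d Pd Pd'

open Classical in
/-- The (finite) set of all stable allocations at profile `P`. -/
noncomputable def stableSet (P : M.Prof) : Finset (Finset M.X) :=
  @Finset.filter _ (fun Y => M.IsStable P Y) (Classical.decPred _) Finset.univ

/-- The list of doctor `d`'s assignments across all stable allocations at `P`
(with multiplicity), ordered from best to worst according to `P d`. -/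
noncomputable def sortedStable (P : M.Prof) (d : M.D) : List (Option (M.Xd d)) :=
  letI := P d
  ((M.stableSet P).val.map (fun Y => M.allocD Y d)).sort (· ≥ ·)

/-- `X^{(j)}_d`: doctor `d`'s `j`-th best stable assignment at `P` (for `1 ≤ j ≤ k`,
`k` the number of stable allocations). -/
noncomputable def nthBest (P : M.Prof) (d : M.D) (j : ℕ) : Option (M.Xd d) :=
  ((M.sortedStable P d)[j - 1]?).join

/-- The `j`-th quantile stable allocation `X^{(j)} = ⋃_{d ∈ D} X^{(j)}_d` at `P`. -/
noncomputable def quantileAlloc (P : M.Prof) (j : ℕ) : Finset M.X :=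
  Finset.univ.filter (fun x => M.nthBest P (M.doc x) j = some ⟨x, rfl⟩)

/-- The `q`-quantile stable mechanism `φ^q`: at a profile with `k` stable allocations
it selects the `⌈kq⌉`-th quantile stable allocation (with `⌈0⌉` taken to be `1`). -/
noncomputable def quantileMech (q : ℝ) : M.Mech :=
  fun P => M.quantileAlloc P (max 1 ⌈((M.stableSet P).card : ℝ) * q⌉₊)

/-- `Y` is the doctor-optimal stable allocation at `P`: it is stable and every doctor
weakly prefers it to every other stable allocation. -/
def IsDoctorOptimal (P : M.Prof) (Y : Finset M.X) : Prop :=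
  M.IsStable P Y ∧
    ∀ Z : Finset M.X, M.IsStable P Z → ∀ d : M.D, (P d).le (M.allocD Z d) (M.allocD Y d)

/-- `Y` is the hospital-optimal stable allocation at `P`. -/
def IsHospitalOptimal (P : M.Prof) (Y : Finset M.X) : Prop :=
  M.IsStable P Y ∧
    ∀ Z : Finset M.X, M.IsStable P Z → ∀ h : M.H, (M.hpref h).le (M.allocH Z h) (M.allocH Y h)

end Market

namespace MkMarket

/-- Doctor map for the market `M_k`: contracts `x^t` (encoded `Sum.inl t`) belong to
doctor `d1 = false`; contract `w` (encoded `Sum.inr ()`) belongs to doctor `d2 = true`. -/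
def mdoc (k : ℕ) : (Fin k ⊕ Unit) → Bool := Sum.elim (fun _ => false) (fun _ => true)

/-- Hospital map for the market `M_k`: each `x^t` involves hospital `h1 = false`
and `w` involves hospital `h2 = true`. -/
def mhos (k : ℕ) : (Fin k ⊕ Unit) → Bool := Sum.elim (fun _ => false) (fun _ => true)

/-- Ranking realizing the fixed hospital preferences of `M_k`:
`h1` ranks `x^k P x^{k-1} P … P x^1 P ∅`, and `h2` ranks `w P ∅`. -/
def hrank (k : ℕ) (h : Bool) : Option {x : Fin k ⊕ Unit // mhos k x = h} → ℕ
  | none => 0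
  | some ⟨Sum.inl t, _⟩ => t.val + 1
  | some ⟨Sum.inr _, _⟩ => 1

lemma hrank_injective (k : ℕ) (h : Bool) : Function.Injective (hrank k h) := by
  rintro (_ | ⟨(t | u), hx⟩) (_ | ⟨(s | v), hy⟩) hab <;>
    simp only [hrank] at hab
  · rfl
  · omega
  · exact absurd hab (by omega)
  · omega
  · have : t = s := Fin.ext (by omega)
    subst this; rfl
  · exact Bool.noConfusion (hx.trans hy.symm)
  · exact absurd hab (by omega)
  · exact Bool.noConfusion (hy.trans hx.symm)
  · rfl

/-- The market `M_k` of the proof of the Theorem: doctors `d1 = false`, `d2 = true`,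
hospitals `h1 = false`, `h2 = true`, contracts `x^1, …, x^k` (encoded as `Sum.inl 0, …,
Sum.inl (k-1)`) between `d1` and `h1`, and `w` (encoded `Sum.inr ()`) between `d2` and `h2`;
hospital preferences: `x^k P … P x^1 P ∅` for `h1` and `w P ∅` for `h2`. -/
def Mk (k : ℕ) : Market where
  X := Fin k ⊕ Unit
  D := Bool
  H := Bool
  doc := mdoc k
  hos := mhos k
  hpref h := LinearOrder.lift' (hrank k h) (hrank_injective k h)

/-- The contract `x^{t+1}` of `M_k`, viewed as a contract of doctor `d1 = false`. -/
def xC (k : ℕ) (t : Fin k) : (Mk k).Xd false := ⟨Sum.inl t, rfl⟩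

/-- The contract `w` of `M_k`, viewed as a contract of doctor `d2 = true`. -/
def wC (k : ℕ) : (Mk k).Xd true := ⟨Sum.inr (), rfl⟩

/-- Ranking realizing `d1`'s true preference `P1 = x^1, x^2, …, x^k` (then ∅). -/
def drank1 (k : ℕ) : Option ((Mk k).Xd false) → ℕ
  | none => 0
  | some ⟨Sum.inl t, _⟩ => k - t.val
  | some ⟨Sum.inr _, _⟩ => 0

lemma drank1_injective (k : ℕ) : Function.Injective (drank1 k) := by
  rintro (_ | ⟨(t | u), hx⟩) (_ | ⟨(s | v), hy⟩) hab <;>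
    simp only [drank1] at hab
  · rfl
  · have := s.isLt; omega
  · exact Bool.noConfusion hy
  · have := t.isLt; omega
  · have h1 := t.isLt; have h2 := s.isLt
    have : t = s := Fin.ext (by omega)
    subst this; rfl
  · exact Bool.noConfusion hy
  · exact Bool.noConfusion hx
  · exact Bool.noConfusion hx
  · exact Bool.noConfusion hx

/-- `d1`'s true preference `P1`: `x^1 P x^2 P … P x^k P ∅`. -/
def P1 (k : ℕ) : (Mk k).DocPref false :=
  LinearOrder.lift' (drank1 k) (drank1_injective k)

/-- `Q` is the truncated preference `P1'` of `d1`: it ranks `x^1 P ∅` and declares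
every other contract unacceptable (`∅ P x^t` for all `t ≠ 1`). -/
def IsTruncation (k : ℕ) (hk : 0 < k) (Q : (Mk k).DocPref false) : Prop :=
  Q.lt none (some (xC k ⟨0, hk⟩)) ∧
    ∀ t : Fin k, t.val ≠ 0 → Q.lt (some (xC k t)) none

/-- Ranking realizing the truncated preference `P1' = x^1` (then ∅, then the rest). -/
def drank1' (k : ℕ) : Option ((Mk k).Xd false) → ℕ
  | none => k
  | some ⟨Sum.inl t, _⟩ => if t.val = 0 then k + 1 else k - t.val
  | some ⟨Sum.inr _, _⟩ => 0

lemma drank1'_injective (k : ℕ) : Function.Injective (drank1' k) := by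
  rintro (_ | ⟨(t | u), hx⟩) (_ | ⟨(s | v), hy⟩) hab <;>
    simp only [drank1'] at hab
  · rfl
  · have := s.isLt; split_ifs at hab <;> omega
  · exact Bool.noConfusion hy
  · have := t.isLt; split_ifs at hab <;> omega
  · have h1 := t.isLt; have h2 := s.isLt
    have : t = s := Fin.ext (by split_ifs at hab <;> omega)
    subst this; rfl
  · exact Bool.noConfusion hy
  · exact Bool.noConfusion hx
  · exact Bool.noConfusion hx
  · exact Bool.noConfusion hx

/-- A concrete realization of the truncated preference `P1'`. -/
def P1' (k : ℕ) : (Mk k).DocPref false :=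
  LinearOrder.lift' (drank1' k) (drank1'_injective k)

/-- The profile `(Q1, Q2)` of doctor preferences in `M_k`. -/
def prof (k : ℕ) (Q1 : (Mk k).DocPref false) (Q2 : (Mk k).DocPref true) : (Mk k).Prof :=
  fun d => match d with
  | false => Q1
  | true => Q2

end MkMarket

namespace Market

variable (M : Market)

lemma allocD_eq_some {Y : Finset M.X} {d : M.D} {x : M.X} (hx : x ∈ Y) (hd : M.doc x = d)
    (uniq : ∀ y ∈ Y, M.doc y = d → y = x) : M.allocD Y d = some ⟨x, hd⟩ := by
  have h : ∃ z ∈ Y, M.doc z = d := ⟨x, hx, hd⟩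
  rw [allocD, dif_pos h]
  exact congrArg some (Subtype.ext (uniq _ h.choose_spec.1 h.choose_spec.2))

lemma allocD_eq_none' {Y : Finset M.X} {d : M.D} (h : ∀ y ∈ Y, M.doc y ≠ d) :
    M.allocD Y d = none := by
  rw [allocD, dif_neg]; rintro ⟨x, hx, hd⟩; exact h x hx hd

lemma allocH_eq_some {Y : Finset M.X} {h : M.H} {x : M.X} (hx : x ∈ Y) (hd : M.hos x = h)
    (uniq : ∀ y ∈ Y, M.hos y = h → y = x) : M.allocH Y h = some ⟨x, hd⟩ := by
  have hh : ∃ z ∈ Y, M.hos z = h := ⟨x, hx, hd⟩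
  rw [allocH, dif_pos hh]
  exact congrArg some (Subtype.ext (uniq _ hh.choose_spec.1 hh.choose_spec.2))

lemma allocH_eq_none' {Y : Finset M.X} {h : M.H} (hh : ∀ y ∈ Y, M.hos y ≠ h) :
    M.allocH Y h = none := by
  rw [allocH, dif_neg]; rintro ⟨x, hx, hd⟩; exact hh x hx hd

end Market

namespace MkMarket

open Classical in
/-- `d2`'s part of a stable allocation. -/
noncomputable def Wset (k : ℕ) (P2 : (Mk k).DocPref true) : Finset ((Mk k).X) :=
  if P2.lt none (some (wC k)) then {Sum.inr ()} else ∅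

variable {k : ℕ} {P2 : (Mk k).DocPref true}

lemma mem_Wset {y : (Mk k).X} :
    y ∈ Wset k P2 ↔ y = Sum.inr () ∧ P2.lt none (some (wC k)) := by
  classical
  unfold Wset
  split_ifs with h
  · simp [h]; exact Finset.mem_singleton
  · simp [h]

lemma allocD_insert_false (t : Fin k) :
    (Mk k).allocD (insert (Sum.inl t) (Wset k P2)) false = some (xC k t) := by
  apply Market.allocD_eq_some _ (Finset.mem_insert_self _ _) rfl
  intro y hy hdoc
  rcases Finset.mem_insert.mp hy with h | h
  · exact h
  · rw [mem_Wset] at h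
    rw [h.1] at hdoc
    exact absurd hdoc (by simp [Mk, mdoc])

lemma allocH_insert_false (t : Fin k) :
    (Mk k).allocH (insert (Sum.inl t) (Wset k P2)) false = some ⟨Sum.inl t, rfl⟩ := by
  apply Market.allocH_eq_some _ (Finset.mem_insert_self _ _) rfl
  intro y hy hhos
  rcases Finset.mem_insert.mp hy with h | h
  · exact h
  · rw [mem_Wset] at h
    rw [h.1] at hhos
    exact absurd hhos (by simp [Mk, mhos])

lemma allocD_insert_true (t : Fin k) :
    (Mk k).allocD (insert (Sum.inl t) (Wset k P2)) true =
      if P2.lt none (some (wC k)) then some (wC k) else none := by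
  classical
  split_ifs with h
  · apply Market.allocD_eq_some _ (Y := insert (Sum.inl t) (Wset k P2))
      (x := Sum.inr ()) ?_ rfl ?_
    · exact Finset.mem_insert_of_mem (mem_Wset.mpr ⟨rfl, h⟩)
    · intro y hy hdoc
      rcases Finset.mem_insert.mp hy with h' | h'
      · rw [h'] at hdoc; exact absurd hdoc (by simp [Mk, mdoc])
      · exact (mem_Wset.mp h').1
  · apply Market.allocD_eq_none'
    intro y hy
    rcases Finset.mem_insert.mp hy with h' | h'
    · rw [h']; simp [Mk, mdoc]
    · exact absurd (mem_Wset.mp h').2 h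

lemma allocH_insert_true (t : Fin k) :
    (Mk k).allocH (insert (Sum.inl t) (Wset k P2)) true =
      if P2.lt none (some (wC k)) then some ⟨Sum.inr (), rfl⟩ else none := by
  classical
  split_ifs with h
  · apply Market.allocH_eq_some _ (Y := insert (Sum.inl t) (Wset k P2))
      (x := Sum.inr ()) ?_ rfl ?_
    · exact Finset.mem_insert_of_mem (mem_Wset.mpr ⟨rfl, h⟩)
    · intro y hy hhos
      rcases Finset.mem_insert.mp hy with h' | h'
      · rw [h'] at hhos; exact absurd hhos (by simp [Mk, mhos])
      · exact (mem_Wset.mp h').1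
  · apply Market.allocH_eq_none'
    intro y hy
    rcases Finset.mem_insert.mp hy with h' | h'
    · rw [h']; simp [Mk, mhos]
    · exact absurd (mem_Wset.mp h').2 h

end MkMarket

namespace MkMarket

variable {k : ℕ} {P2 : (Mk k).DocPref true}

lemma isStable_iff (hk : 2 ≤ k) {Y : Finset ((Mk k).X)} :
    (Mk k).IsStable (prof k (P1 k) P2) Y ↔
      ∃ t : Fin k, Y = insert (Sum.inl t) (Wset k P2) := by
  constructor
  · rintro ⟨halloc, ⟨hirD, hirH⟩, hblock⟩
    -- some x^t is in Y
    have hex : ∃ t : Fin k, Sum.inl t ∈ Y := by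
      by_contra hno
      push_neg at hno
      have hD : (Mk k).allocD Y false = none := by
        apply Market.allocD_eq_none'
        rintro (t | u) hy hdoc
        · exact hno t hy
        · exact Bool.noConfusion hdoc
      have hH : (Mk k).allocH Y false = none := by
        apply Market.allocH_eq_none'
        rintro (t | u) hy hhos
        · exact hno t hy
        · exact Bool.noConfusion hhos
      refine hblock (Sum.inl ⟨0, by omega⟩) ⟨fun hm => hno _ hm, ?_, ?_⟩
      · show (P1 k).lt ((Mk k).allocD Y false) (some (xC k ⟨0, by omega⟩))
        rw [hD]
        show drank1 k none < drank1 k (some (xC k ⟨0, by omega⟩))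
        show 0 < k - 0
        omega
      · show ((Mk k).hpref false).lt ((Mk k).allocH Y false) (some ⟨Sum.inl ⟨0, by omega⟩, rfl⟩)
        rw [hH]
        show hrank k false none < hrank k false (some ⟨Sum.inl ⟨0, by omega⟩, rfl⟩)
        show 0 < 0 + 1
        omega
    obtain ⟨t, ht⟩ := hex
    have huniq : ∀ s : Fin k, Sum.inl s ∈ Y → s = t := by
      intro s hs
      by_contra hne
      have hne' : (Sum.inl s : (Mk k).X) ≠ Sum.inl t := fun h => hne (Sum.inl.inj h)
      exact (halloc _ hs _ ht hne').2 rfl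
    have hw : (Sum.inr () : (Mk k).X) ∈ Y ↔ P2.lt none (some (wC k)) := by
      constructor
      · intro hmem
        have hDt : (Mk k).allocD Y true = some (wC k) := by
          apply Market.allocD_eq_some _ hmem rfl
          rintro (s | u) hy hdoc
          · exact Bool.noConfusion hdoc
          · rfl
        have := hirD true
        rw [hDt] at this
        exact lt_of_le_of_ne (α := Option ((Mk k).Xd true)) this (fun h => nomatch h)
      · intro hlt
        by_contra hmem
        have hDt : (Mk k).allocD Y true = none := by
          apply Market.allocD_eq_none'
          rintro (s | u) hy hdoc
          · exact Bool.noConfusion hdoc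
          · exact hmem hy
        have hHt : (Mk k).allocH Y true = none := by
          apply Market.allocH_eq_none'
          rintro (s | u) hy hhos
          · exact Bool.noConfusion hhos
          · exact hmem hy
        refine hblock (Sum.inr ()) ⟨hmem, ?_, ?_⟩
        · show P2.lt ((Mk k).allocD Y true) (some (wC k))
          rw [hDt]; exact hlt
        · show ((Mk k).hpref true).lt ((Mk k).allocH Y true) (some ⟨Sum.inr (), rfl⟩)
          rw [hHt]
          show hrank k true none < hrank k true (some ⟨Sum.inr (), rfl⟩)
          show 0 < 1
          omega
    refine ⟨t, ?_⟩
    ext y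
    refine Iff.trans ?_ (Finset.mem_insert.trans (or_congr Iff.rfl mem_Wset)).symm
    constructor
    · intro hy
      rcases y with s | u
      · exact Or.inl (by rw [huniq s hy])
      · exact Or.inr ⟨rfl, hw.mp hy⟩
    · rintro (rfl | ⟨rfl, hlt⟩)
      · exact ht
      · exact hw.mpr hlt
  · rintro ⟨t, rfl⟩
    refine ⟨?_, ⟨?_, ?_⟩, ?_⟩
    · -- allocation
      intro x hx y hy hxy
      rcases Finset.mem_insert.mp hx with rfl | hx' <;>
        rcases Finset.mem_insert.mp hy with rfl | hy'
      · exact absurd rfl hxy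
      · rw [(mem_Wset.mp hy').1]
        exact ⟨Bool.noConfusion, Bool.noConfusion⟩
      · rw [(mem_Wset.mp hx').1]
        exact ⟨Bool.noConfusion, Bool.noConfusion⟩
      · rw [(mem_Wset.mp hx').1, (mem_Wset.mp hy').1] at hxy
        exact absurd rfl hxy
    · -- IR doctors
      intro d
      cases d
      · show (P1 k).le none ((Mk k).allocD _ false)
        rw [allocD_insert_false]
        show drank1 k none ≤ drank1 k (some (xC k t))
        exact Nat.zero_le _
      · show P2.le none ((Mk k).allocD _ true)
        rw [allocD_insert_true]
        split_ifs with h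
        · letI := P2; exact le_of_lt h
        · letI := P2; exact le_refl _
    · -- IR hospitals
      intro h
      cases h
      · show ((Mk k).hpref false).le none ((Mk k).allocH _ false)
        rw [allocH_insert_false]
        show hrank k false none ≤ hrank k false (some ⟨Sum.inl t, rfl⟩)
        exact Nat.zero_le _
      · show ((Mk k).hpref true).le none ((Mk k).allocH _ true)
        rw [allocH_insert_true]
        split_ifs with h
        · show hrank k true none ≤ hrank k true (some ⟨Sum.inr (), rfl⟩)
          exact Nat.zero_le _
        · letI := (Mk k).hpref true; exact le_refl _
    · -- no blocking
      rintro (s | u) ⟨hmem, hd, hh⟩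
      · have hd2 : (P1 k).lt ((Mk k).allocD (insert (Sum.inl t) (Wset k P2)) false)
            (some (⟨Sum.inl s, rfl⟩ : (Mk k).Xd false)) := hd
        rw [allocD_insert_false] at hd2
        have hd3 : k - t.val < k - s.val := hd2
        have hh2 : ((Mk k).hpref false).lt ((Mk k).allocH (insert (Sum.inl t) (Wset k P2)) false)
            (some (⟨Sum.inl s, rfl⟩ : (Mk k).Xh false)) := hh
        rw [allocH_insert_false] at hh2
        have hh3 : t.val + 1 < s.val + 1 := hh2
        have := t.isLt; have := s.isLt
        omega
      · have hd2 : P2.lt ((Mk k).allocD (insert (Sum.inl t) (Wset k P2)) true)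
            (some (wC k)) := hd
        rw [allocD_insert_true] at hd2
        by_cases hlt : P2.lt none (some (wC k))
        · exact hmem (Finset.mem_insert_of_mem (mem_Wset.mpr ⟨rfl, hlt⟩))
        · rw [if_neg hlt] at hd2
          exact hlt hd2

lemma insert_inj :
    Function.Injective (fun t : Fin k => insert (Sum.inl t) (Wset k P2)) := by
  intro t s h
  have hm : (Sum.inl t : (Mk k).X) ∈ insert (Sum.inl s) (Wset k P2) := by
    rw [show insert (Sum.inl s) (Wset k P2) = insert (Sum.inl t) (Wset k P2) from h.symm]
    exact Finset.mem_insert_self _ _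
  rcases Finset.mem_insert.mp hm with h' | h'
  · exact Sum.inl.inj h'
  · exact absurd (mem_Wset.mp h').1 (by simp)

lemma stableSet_eq (hk : 2 ≤ k) :
    (Mk k).stableSet (prof k (P1 k) P2) =
      Finset.map ⟨fun t : Fin k => insert (Sum.inl t) (Wset k P2), insert_inj⟩ Finset.univ := by
  ext Y
  simp only [Market.stableSet, Finset.mem_filter, Finset.mem_univ, true_and, Finset.mem_map,
    Function.Embedding.coeFn_mk]
  rw [isStable_iff hk]
  constructor
  · rintro ⟨t, rfl⟩; exact ⟨t, rfl⟩
  · rintro ⟨t, rfl⟩; exact ⟨t, rfl⟩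

lemma sortedStable_eq (hk : 2 ≤ k) :
    (Mk k).sortedStable (prof k (P1 k) P2) false =
      List.ofFn (fun i : Fin k => some (xC k i)) := by
  letI := P1 k
  unfold Market.sortedStable
  apply fun hp hs => List.Perm.eq_of_pairwise' (r := (· ≥ ·)) (Multiset.pairwise_sort _ _) hs hp
  · rw [← Multiset.coe_eq_coe]
    refine (Multiset.sort_eq _ _).trans ?_
    rw [stableSet_eq hk, Finset.map_val,
      Multiset.map_map, ← Fin.univ_val_map]
    exact Multiset.map_congr rfl (fun t _ => allocD_insert_false t)
  · refine List.pairwise_ofFn.mpr ?_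
    intro i j hij
    have h' : i.val < j.val := hij
    show drank1 k (some (xC k j)) ≤ drank1 k (some (xC k i))
    show k - j.val ≤ k - i.val
    omega

end MkMarket

open MkMarket in
/-- In `M_k`, under `(P1, P2)` for any preference `P2` of `d2`, the
`j`-th best stable contract of doctor `d1` (ordering `d1`'s contracts across all stable
allocations from best to worst according to `P1`) is `x^j`, for every `j = 1, …, k`;
consequently the `j`-th quantile stable allocation assigns contract `x^j` to `d1`. -/
theorem nthBest_d1 (k : ℕ) (hk : 2 ≤ k) (P2 : (Mk k).DocPref true)
    (j : ℕ) (hj1 : 1 ≤ j) (hjk : j ≤ k) :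
    (Mk k).nthBest (prof k (P1 k) P2) false j = some (xC k ⟨j - 1, by omega⟩) ∧
    (Mk k).allocD ((Mk k).quantileAlloc (prof k (P1 k) P2) j) false =
      some (xC k ⟨j - 1, by omega⟩) := by
  have h1 : (Mk k).nthBest (prof k (P1 k) P2) false j = some (xC k ⟨j - 1, by omega⟩) := by
    unfold Market.nthBest
    rw [sortedStable_eq hk, List.getElem?_ofFn]
    simp [List.ofFnNthVal, show j - 1 < k by omega]
  refine ⟨h1, ?_⟩
  show (Mk k).allocD ((Mk k).quantileAlloc (prof k (P1 k) P2) j) false =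
      some (⟨Sum.inl ⟨j - 1, by omega⟩, rfl⟩ : (Mk k).Xd false)
  refine Market.allocD_eq_some (Mk k) (d := false)
      (x := (Sum.inl ⟨j - 1, by omega⟩ : (Mk k).X)) ?_ rfl ?_
  · rw [Market.quantileAlloc]
    exact Finset.mem_filter.mpr ⟨Finset.mem_univ _, h1⟩
  · rintro (s | u) hy hdoc
    · rw [Market.quantileAlloc] at hy
      replace hy := Finset.mem_filter.mp hy
      have h2 : (Mk k).nthBest (prof k (P1 k) P2) false j =
          some (⟨Sum.inl s, rfl⟩ : (Mk k).Xd false) := hy.2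
      rw [h1] at h2
      have h3 := congrArg (fun o => Option.map Subtype.val o) h2
      simp only [Option.map_some, xC] at h3
      exact (Option.some.inj h3).symm
    · exact Bool.noConfusion hdoc
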